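/- Lower bound recovery: if I is a set of pairwise incompatible indices containing at least one index of some optimal integral solution, and u* is an optimizer of the merged-objective dual (D_I), then z* = w(u*) + min_{kl ∈ I} r_{kl}(u*). -/

import Mathlib

open Matrix

/-- Primal feasibility for the LP with partition constraints:
Ax ≥ b, Σ_{j : grp j = i} x_j = 1 for each group i, x ≥ 0. -/
def Feas {m n E : ℕ} (A : Matrix (Fin m) (Fin E) ℝ) (b : Fin m → ℝ)
    (grp : Fin E → Fin n) (x : Fin E → ℝ) : Prop :=
  b ≤ A.mulVec x ∧ (∀ i : Fin n, (∑ j : Fin E, if grp j = i then x j else 0) = 1) ∧ 0 ≤ x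

/-- A 0/1 (integral) vector. -/
def Integral {E : ℕ} (x : Fin E → ℝ) : Prop := ∀ j, x j = 0 ∨ x j = 1

/-- Dual feasibility: u_q ≥ 0 and u_{grp j} + Σ_q A_{qj} u_q ≤ c_j for each index j. -/
def DualFeas {m n E : ℕ} (A : Matrix (Fin m) (Fin E) ℝ) (c : Fin E → ℝ)
    (grp : Fin E → Fin n) (uq : Fin m → ℝ) (uv : Fin n → ℝ) : Prop :=
  0 ≤ uq ∧ ∀ j : Fin E, uv (grp j) + (∑ q : Fin m, A q j * uq q) ≤ c j

/-- Dual objective w(u) = b·u_q + Σ_i u_i. -/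
def dualObj {m n : ℕ} (b : Fin m → ℝ) (uq : Fin m → ℝ) (uv : Fin n → ℝ) : ℝ :=
  b ⬝ᵥ uq + ∑ i : Fin n, uv i

/-- Reduced cost r_j(u) = c_j − u_{grp j} − Σ_q A_{qj} u_q. -/
def rc {m n E : ℕ} (A : Matrix (Fin m) (Fin E) ℝ) (c : Fin E → ℝ)
    (grp : Fin E → Fin n) (uq : Fin m → ℝ) (uv : Fin n → ℝ) (j : Fin E) : ℝ :=
  c j - uv (grp j) - ∑ q : Fin m, A q j * uq q

/-!
Since the polytope is integral and the indices of `I` are pairwise incompatible, the inequality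
`c ⬝ᵥ x ≥ z* + ∑_{kl ∈ I} R_kl x_kl` holds on every integral feasible point, hence on the whole
polytope. The merged objective `w(u) + |I|⁻¹ ∑_{kl ∈ I} r_kl(u)` is the LP dual of minimizing
`c ⬝ᵥ x` over feasible `x` with `x_kl ≥ |I|⁻¹` on `I`; by strong duality (from Farkas' lemma,
itself from a conic Carathéodory argument and the separation theorem) its optimum is therefore at
least `z* + |I|⁻¹ ∑_{kl ∈ I} R_kl`. Weak duality gives `w(u*) + r_kl(u*) ≤ z* + R_kl` for each
`kl ∈ I`, so averaging forces equality for every `kl ∈ I`; as `R ≥ 0` vanishes at some `kl₀ ∈ I`,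
taking the minimum over `I` yields `z*`.
-/

open Finset Matrix

namespace PointedCone

variable {ι E : Type*}

/-- Conic Carathéodory step: shift `x` along the relation `μ` until a coordinate vanishes. -/
theorem exists_erase_of_sum_smul_eq_zero [DecidableEq ι] [AddCommGroup E] [Module ℝ E] {v : ι → E}
    {s : Finset ι} {μ x : ι → ℝ} (hμ : ∑ i ∈ s, μ i • v i = 0) (hpos : ∃ i ∈ s, 0 < μ i)
    (hx : ∀ i ∈ s, 0 ≤ x i) :
    ∃ j ∈ s, ∃ y : ι → ℝ, (∀ i ∈ s.erase j, 0 ≤ y i) ∧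
      ∑ i ∈ s.erase j, y i • v i = ∑ i ∈ s, x i • v i := by
  obtain ⟨j, hj, hjmin⟩ := exists_min_image (s.filter (0 < μ ·)) (fun i => x i / μ i)
    (by simpa [Finset.Nonempty] using hpos)
  rw [mem_filter] at hj
  set t := x j / μ j
  have ht : 0 ≤ t := div_nonneg (hx j hj.1) hj.2.le
  refine ⟨j, hj.1, fun i => x i - t * μ i, fun i hi => ?_, ?_⟩
  · have hi := mem_of_mem_erase hi
    rcases le_or_gt (μ i) 0 with hμi | hμi
    · nlinarith [hx i hi]
    · exact sub_nonneg.2 ((le_div_iff₀ hμi).1 (hjmin i (mem_filter.2 ⟨hi, hμi⟩)))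
  · rw [sum_erase _ (by simp [t, hj.2.ne']), sum_congr rfl fun i _ => sub_smul _ _ _,
      sum_sub_distrib]
    simp_rw [mul_smul, ← smul_sum, hμ, smul_zero, sub_zero]

theorem mem_hull_image_finset_iff [AddCommGroup E] [Module ℝ E] {v : ι → E} {s : Finset ι}
    {z : E} :
    z ∈ hull ℝ (v '' s) ↔ ∃ x : ι → ℝ, (∀ i ∈ s, 0 ≤ x i) ∧ ∑ i ∈ s, x i • v i = z := by
  classical
  rw [Submodule.mem_span_image_finset_iff_exists_fun']
  constructor
  · rintro ⟨c, rfl⟩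
    exact ⟨fun i => c i, fun i _ => (c i).2, by simp [Nonneg.coe_smul]⟩
  · rintro ⟨x, hx, rfl⟩
    refine ⟨fun i => if h : i ∈ s then ⟨x i, hx i h⟩ else 0, sum_congr rfl fun i hi => ?_⟩
    simp [hi, Nonneg.mk_smul]

theorem coe_hull_image_eq_biUnion_erase [DecidableEq ι] [AddCommGroup E] [Module ℝ E]
    {v : ι → E} {s : Finset ι} (hs : ¬LinearIndepOn ℝ v s) :
    (hull ℝ (v '' s) : Set E) = ⋃ j ∈ s, (hull ℝ (v '' ↑(s.erase j)) : Set E) := by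
  refine subset_antisymm (fun z hz => ?_) (Set.iUnion₂_subset fun j _ =>
    Submodule.span_mono (Set.image_mono (coe_subset.2 (erase_subset j s))))
  obtain ⟨x, hx, rfl⟩ := mem_hull_image_finset_iff.1 hz
  obtain ⟨μ, hμ, i, hi, hμi⟩ : ∃ μ : ι → ℝ, ∑ i ∈ s, μ i • v i = 0 ∧ ∃ i ∈ s, 0 < μ i := by
    obtain ⟨μ, hμ, i, hi, hμi⟩ := by simpa [linearIndepOn_finset_iff] using hs
    rcases lt_or_gt_of_ne hμi with hneg | hpos
    · exact ⟨-μ, by simp [neg_smul, hμ], i, hi, by simpa using hneg⟩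
    · exact ⟨μ, hμ, i, hi, hpos⟩
  obtain ⟨j, hj, y, hy, hyx⟩ := exists_erase_of_sum_smul_eq_zero hμ ⟨i, hi, hμi⟩ hx
  exact Set.mem_biUnion hj (mem_hull_image_finset_iff.2 ⟨y, hy, hyx⟩)

variable [AddCommGroup E] [Module ℝ E] [TopologicalSpace E] [IsTopologicalAddGroup E]
  [ContinuousSMul ℝ E] [T2Space E]

theorem isClosed_hull_image_of_linearIndepOn {v : ι → E} {s : Finset ι}
    (hs : LinearIndepOn ℝ v s) : IsClosed (hull ℝ (v '' s) : Set E) := by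
  let L := Fintype.linearCombination ℝ (fun i : (s : Set ι) => v i)
  have hL : (hull ℝ (v '' s) : Set E) = L '' {x | 0 ≤ x} := by
    ext z
    simp only [SetLike.mem_coe, Fintype.mem_span_image_iff_exists_fun, Set.mem_image,
      Set.mem_ofPred_eq, L, Fintype.linearCombination_apply]
    constructor
    · rintro ⟨c, rfl⟩
      exact ⟨fun i => c i, fun i => (c i).2, by simp [Nonneg.coe_smul]⟩
    · rintro ⟨x, hx, rfl⟩
      exact ⟨fun i => ⟨x i, hx i⟩, by simp [Nonneg.mk_smul]⟩
  rw [hL]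
  exact (LinearMap.isClosedEmbedding_of_injective (LinearMap.ker_eq_bot.2
    hs.fintypeLinearCombination_injective)).isClosedMap _
      (isClosed_le continuous_const continuous_id)

theorem isClosed_hull_image_finset (v : ι → E) (s : Finset ι) :
    IsClosed (hull ℝ (v '' s) : Set E) := by
  classical
  induction s using Finset.strongInduction with
  | H s ih =>
    by_cases hs : LinearIndepOn ℝ v s
    · exact isClosed_hull_image_of_linearIndepOn hs
    · rw [coe_hull_image_eq_biUnion_erase hs]
      exact isClosed_biUnion_finset fun j hj => ih _ (erase_ssubset hj)

end PointedCone

namespace Matrix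

variable {κ ι μ : Type*} [Fintype κ] [Fintype μ]

theorem exists_nonneg_mulVec_eq_of_forall [Fintype ι] (M : Matrix κ ι ℝ) (b : κ → ℝ)
    (h : ∀ y, 0 ≤ y ᵥ* M → 0 ≤ y ⬝ᵥ b) : ∃ x, 0 ≤ x ∧ M *ᵥ x = b := by
  classical
  let C : ProperCone ℝ (κ → ℝ) :=
    ⟨PointedCone.hull ℝ (M.col '' (univ : Finset ι)),
      PointedCone.isClosed_hull_image_finset M.col univ⟩
  by_cases hb : b ∈ C
  · obtain ⟨x, hx, hxb⟩ := PointedCone.mem_hull_image_finset_iff.1 hb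
    refine ⟨x, fun i => hx i (mem_univ i), ?_⟩
    rw [← hxb, mulVec_eq_sum]
    simp [col]
  · obtain ⟨f, hfC, hfb⟩ := C.hyperplane_separation_point hb
    let y : κ → ℝ := fun k => f fun j => if k = j then 1 else 0
    have hf : ∀ z, f z = y ⬝ᵥ z := fun z => by
      simpa [dotProduct, mul_comm] using LinearMap.pi_apply_eq_sum_univ (f : (κ → ℝ) →ₗ[ℝ] ℝ) z
    refine absurd (h y fun i => ?_) (by rw [← hf]; exact hfb.not_ge)
    have := hfC _ (PointedCone.subset_hull ⟨i, mem_univ i, rfl⟩)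
    rwa [hf] at this

theorem exists_nonneg_mulVec_le_mulVec_eq_of_forall [Fintype ι] (M : Matrix κ ι ℝ)
    (G : Matrix μ ι ℝ) (d : κ → ℝ) (e : μ → ℝ)
    (h : ∀ y w, 0 ≤ y → 0 ≤ y ᵥ* M + w ᵥ* G → 0 ≤ y ⬝ᵥ d + w ⬝ᵥ e) :
    ∃ x, 0 ≤ x ∧ M *ᵥ x ≤ d ∧ G *ᵥ x = e := by
  classical
  obtain ⟨xs, hxs, hN⟩ :=
    exists_nonneg_mulVec_eq_of_forall (fromBlocks M (1 : Matrix κ κ ℝ) G 0) (Sum.elim d e)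
      fun z hz => by
        rw [← Sum.elim_comp_inl_inr z] at hz ⊢
        rw [vecMul_fromBlocks, ← Sum.elim_zero_zero, Sum.elim_le_elim_iff] at hz
        simp only [Sum.elim_comp_inl, Sum.elim_comp_inr, vecMul_one, vecMul_zero, add_zero] at hz
        rw [sumElim_dotProduct_sumElim]
        exact h _ _ hz.2 hz.1
  rw [← Sum.elim_comp_inl_inr xs, ← Sum.elim_zero_zero, Sum.elim_le_elim_iff] at hxs
  rw [← Sum.elim_comp_inl_inr xs, fromBlocks_mulVec] at hN
  simp only [Sum.elim_comp_inl, Sum.elim_comp_inr, one_mulVec, zero_mulVec, add_zero,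
    Sum.elim_eq_iff] at hN
  exact ⟨_, hxs.1, hN.1 ▸ le_add_of_nonneg_right hxs.2, hN.2⟩

theorem dotProduct_add_le_mul_of_isMax_dual {M : Matrix κ ι ℝ} {G : Matrix μ ι ℝ} {c : ι → ℝ}
    {d : κ → ℝ} {e : μ → ℝ} {y : κ → ℝ} {w : μ → ℝ} (hy : 0 ≤ y) (hyw : y ᵥ* M + w ᵥ* G ≤ c)
    (hmax : ∀ y' w', 0 ≤ y' → y' ᵥ* M + w' ᵥ* G ≤ c → d ⬝ᵥ y' + e ⬝ᵥ w' ≤ d ⬝ᵥ y + e ⬝ᵥ w)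
    {p : κ → ℝ} {q : μ → ℝ} {t : ℝ} (hp : 0 ≤ p) (ht : 0 ≤ t) (hpq : p ᵥ* M + q ᵥ* G ≤ t • c) :
    d ⬝ᵥ p + e ⬝ᵥ q ≤ t * (d ⬝ᵥ y + e ⬝ᵥ w) := by
  have hpos : 0 < 1 + t := by linarith
  -- `(1 + t)⁻¹ • (y + p, w + q)` is dual feasible
  have := hmax ((1 + t)⁻¹ • (y + p)) ((1 + t)⁻¹ • (w + q))
    (smul_nonneg (inv_nonneg.2 hpos.le) (add_nonneg hy hp)) (by
      rw [smul_vecMul, smul_vecMul, ← smul_add, add_vecMul, add_vecMul,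
        add_add_add_comm, inv_smul_le_iff_of_pos hpos]
      calc _ ≤ c + t • c := add_le_add hyw hpq
        _ = (1 + t) • c := by rw [add_smul, one_smul])
  rw [dotProduct_smul, dotProduct_smul, ← smul_add, smul_eq_mul, inv_mul_le_iff₀ hpos,
    dotProduct_add, dotProduct_add, add_add_add_comm] at this
  linarith

theorem exists_dotProduct_le_of_isMax_dual [Fintype ι] (M : Matrix κ ι ℝ) (G : Matrix μ ι ℝ)
    (c : ι → ℝ) (d : κ → ℝ) (e : μ → ℝ) {y : κ → ℝ} {w : μ → ℝ} (hy : 0 ≤ y)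
    (hyw : y ᵥ* M + w ᵥ* G ≤ c)
    (hmax : ∀ y' w', 0 ≤ y' → y' ᵥ* M + w' ᵥ* G ≤ c → d ⬝ᵥ y' + e ⬝ᵥ w' ≤ d ⬝ᵥ y + e ⬝ᵥ w) :
    ∃ x, 0 ≤ x ∧ d ≤ M *ᵥ x ∧ G *ᵥ x = e ∧ c ⬝ᵥ x ≤ d ⬝ᵥ y + e ⬝ᵥ w := by
  set δ := d ⬝ᵥ y + e ⬝ᵥ w
  have hrow : ∀ v : Unit → ℝ, v ᵥ* replicateRow Unit c = v () • c := fun v => by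
    ext
    simp [vecMul, dotProduct, replicateRow]
  obtain ⟨x, hx, hxM, hxG⟩ := exists_nonneg_mulVec_le_mulVec_eq_of_forall
    (fromRows (-M) (replicateRow Unit c)) G (Sum.elim (-d) fun _ => δ) e fun z q hz hzq => by
      rw [← Sum.elim_comp_inl_inr z, ← Sum.elim_zero_zero, Sum.elim_le_elim_iff] at hz
      rw [← Sum.elim_comp_inl_inr z, sumElim_vecMul_fromRows, vecMul_neg, hrow] at hzq
      rw [← Sum.elim_comp_inl_inr z, sumElim_dotProduct_sumElim]
      have := dotProduct_add_le_mul_of_isMax_dual hy hyw hmax hz.1 (hz.2 ()) (q := -q)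
        (t := z (Sum.inr ())) fun i => by
          have := hzq i
          simp only [neg_vecMul, Pi.add_apply, Pi.neg_apply, Pi.zero_apply, Pi.smul_apply,
            smul_eq_mul, Function.comp_apply] at this ⊢
          linarith
      have hδ : (z ∘ Sum.inr) ⬝ᵥ (fun _ => δ) = z (Sum.inr ()) * δ := by simp [dotProduct]
      rw [dotProduct_neg, dotProduct_comm _ d, hδ, dotProduct_comm q]
      rw [dotProduct_neg] at this
      linarith
  rw [fromRows_mulVec, Sum.elim_le_elim_iff] at hxM
  refine ⟨x, hx, fun k => ?_, hxG, ?_⟩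
  · simpa [neg_mulVec] using hxM.1 k
  · simpa [replicateRow, mulVec, dotProduct_comm] using hxM.2 ()

end Matrix

section PartitionLP

variable {m n E : ℕ} (A : Matrix (Fin m) (Fin E) ℝ) (b : Fin m → ℝ) (c : Fin E → ℝ)
  (grp : Fin E → Fin n)

def partitionMatrix : Matrix (Fin n) (Fin E) ℝ := of fun i j => if grp j = i then 1 else 0

def IsIdeal : Prop :=
  ∀ c' : Fin E → ℝ, (∃ x0 : Fin E → ℝ, Feas A b grp x0) →
    ∃ xt : Fin E → ℝ, Feas A b grp xt ∧ Integral xt ∧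
      ∀ y : Fin E → ℝ, Feas A b grp y → c' ⬝ᵥ xt ≤ c' ⬝ᵥ y

def PairwiseIncompatible (I : Finset (Fin E)) : Prop :=
  ∀ x : Fin E → ℝ, Feas A b grp x → Integral x → ∀ j ∈ I, ∀ j' ∈ I, x j = 1 → x j' = 1 → j = j'

theorem vecMul_partitionMatrix (u : Fin n → ℝ) : u ᵥ* partitionMatrix grp = u ∘ grp := by
  ext j
  simp [partitionMatrix, vecMul, dotProduct]

theorem feas_iff {x : Fin E → ℝ} :
    Feas A b grp x ↔ b ≤ A *ᵥ x ∧ partitionMatrix grp *ᵥ x = 1 ∧ 0 ≤ x := by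
  simp [Feas, partitionMatrix, mulVec, dotProduct, funext_iff]

theorem rc_eq (uq : Fin m → ℝ) (uv : Fin n → ℝ) :
    rc A c grp uq uv = c - (uq ᵥ* A + uv ᵥ* partitionMatrix grp) := by
  ext j
  simp [rc, vecMul_partitionMatrix, vecMul, dotProduct, mul_comm, sub_sub, add_comm]

theorem dualFeas_iff {uq : Fin m → ℝ} {uv : Fin n → ℝ} :
    DualFeas A c grp uq uv ↔ 0 ≤ uq ∧ uq ᵥ* A + uv ᵥ* partitionMatrix grp ≤ c := by
  simp [DualFeas, Pi.le_def, vecMul_partitionMatrix, vecMul, dotProduct, mul_comm, add_comm]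

theorem dualObj_add_rc_dotProduct (uq : Fin m → ℝ) (uv : Fin n → ℝ) (χ : Fin E → ℝ) :
    dualObj b uq uv + rc A c grp uq uv ⬝ᵥ χ =
      c ⬝ᵥ χ + (b - A *ᵥ χ) ⬝ᵥ uq + (1 - partitionMatrix grp *ᵥ χ) ⬝ᵥ uv := by
  rw [dualObj, rc_eq, sub_dotProduct, add_dotProduct, sub_dotProduct, sub_dotProduct,
    one_dotProduct, dotProduct_comm (A *ᵥ χ), dotProduct_comm (_ *ᵥ χ), dotProduct_mulVec,
    dotProduct_mulVec, dotProduct_comm b]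
  ring

variable {A b c grp}

theorem DualFeas.rc_nonneg {uq : Fin m → ℝ} {uv : Fin n → ℝ} (hu : DualFeas A c grp uq uv)
    (j : Fin E) : 0 ≤ rc A c grp uq uv j := by
  have := hu.2 j
  rw [rc]
  linarith

theorem dualObj_add_rc_dotProduct_le {x : Fin E → ℝ} {uq : Fin m → ℝ} {uv : Fin n → ℝ}
    (hx : Feas A b grp x) (hu : DualFeas A c grp uq uv) :
    dualObj b uq uv + rc A c grp uq uv ⬝ᵥ x ≤ c ⬝ᵥ x := by
  obtain ⟨hAx, hPx, -⟩ := (feas_iff A b grp).1 hx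
  rw [dualObj_add_rc_dotProduct, hPx, sub_self, zero_dotProduct, add_zero, add_le_iff_nonpos_right]
  simpa using dotProduct_le_dotProduct_of_nonneg_right (sub_nonpos.2 hAx) hu.1

theorem dualObj_add_rc_le {x : Fin E → ℝ} {uq : Fin m → ℝ} {uv : Fin n → ℝ} {j : Fin E}
    (hx : Feas A b grp x) (hu : DualFeas A c grp uq uv) (hxj : x j = 1) :
    dualObj b uq uv + rc A c grp uq uv j ≤ c ⬝ᵥ x := by
  refine le_trans ?_ (dualObj_add_rc_dotProduct_le hx hu)
  gcongr
  simpa [hxj, dotProduct] using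
    single_le_sum (fun i _ => mul_nonneg (hu.rc_nonneg i) (hx.2.2 i)) (mem_univ j)

/-- `dualObj b uq uv + rc A c grp uq uv ⬝ᵥ χ` is the dual objective of the partition LP with the
extra bounds `χ ≤ x`. -/
theorem exists_feas_le_dualObj_add_rc_dotProduct {χ : Fin E → ℝ} (hχ : 0 ≤ χ) {uq : Fin m → ℝ}
    {uv : Fin n → ℝ} (hu : DualFeas A c grp uq uv)
    (hmax : ∀ uq' uv', DualFeas A c grp uq' uv' →
      dualObj b uq' uv' + rc A c grp uq' uv' ⬝ᵥ χ ≤ dualObj b uq uv + rc A c grp uq uv ⬝ᵥ χ) :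
    ∃ x, Feas A b grp x ∧ χ ≤ x ∧ c ⬝ᵥ x ≤ dualObj b uq uv + rc A c grp uq uv ⬝ᵥ χ := by
  rw [dualFeas_iff] at hu
  obtain ⟨x, hx, hAx, hPx, hcx⟩ := exists_dotProduct_le_of_isMax_dual A (partitionMatrix grp) c
    (b - A *ᵥ χ) (1 - partitionMatrix grp *ᵥ χ) hu.1 hu.2 fun uq' uv' huq' hu' => by
      have := hmax uq' uv' ((dualFeas_iff A c grp).2 ⟨huq', hu'⟩)
      rw [dualObj_add_rc_dotProduct, dualObj_add_rc_dotProduct] at this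
      linarith
  refine ⟨x + χ, (feas_iff A b grp).2 ⟨?_, ?_, add_nonneg hx hχ⟩, le_add_of_nonneg_left hx, ?_⟩
  · rwa [mulVec_add, ← sub_le_iff_le_add]
  · rw [mulVec_add, hPx, sub_add_cancel]
  · rw [dotProduct_add, dualObj_add_rc_dotProduct]
    linarith

theorem IsIdeal.le_dotProduct (hideal : IsIdeal A b grp) {a : Fin E → ℝ} {β : ℝ}
    (h : ∀ x, Feas A b grp x → Integral x → β ≤ a ⬝ᵥ x) {x : Fin E → ℝ} (hx : Feas A b grp x) :
    β ≤ a ⬝ᵥ x := by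
  obtain ⟨xt, hxt, hint, hopt⟩ := hideal a ⟨x, hx⟩
  exact (h xt hxt hint).trans (hopt x hx)

variable {zstar : ℝ} {I : Finset (Fin E)} {R : Fin E → ℝ}

theorem nonneg_of_add_mem {j : Fin E} {r : ℝ}
    (hz : zstar ∈ lowerBounds {z | ∃ x : Fin E → ℝ, Feas A b grp x ∧ c ⬝ᵥ x = z})
    (hr : zstar + r ∈ {z | ∃ x : Fin E → ℝ, Feas A b grp x ∧ x j = 1 ∧ c ⬝ᵥ x = z}) :
    0 ≤ r := by
  obtain ⟨x, hx, -, hcx⟩ := hr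
  exact (le_add_iff_nonneg_right zstar).1 (hz ⟨x, hx, hcx⟩)

theorem add_sum_mul_le_dotProduct_of_integral
    (hz : zstar ∈ lowerBounds {z | ∃ x : Fin E → ℝ, Feas A b grp x ∧ c ⬝ᵥ x = z})
    (hinc : PairwiseIncompatible A b grp I)
    (hR : ∀ j ∈ I,
      zstar + R j ∈ lowerBounds {z | ∃ x : Fin E → ℝ, Feas A b grp x ∧ x j = 1 ∧ c ⬝ᵥ x = z})
    {x : Fin E → ℝ} (hx : Feas A b grp x) (hint : Integral x) :
    zstar + ∑ kl ∈ I, R kl * x kl ≤ c ⬝ᵥ x := by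
  by_cases h : ∃ j ∈ I, x j = 1
  · obtain ⟨j, hj, hxj⟩ := h
    rw [sum_eq_single_of_mem j hj fun i hi hij => ?_, hxj, mul_one]
    · exact hR j hj ⟨x, hx, hxj, rfl⟩
    · rcases hint i with h0 | h1
      · rw [h0, mul_zero]
      · exact absurd (hinc x hx hint i hi j hj h1 hxj) hij
  · push Not at h
    rw [sum_eq_zero fun i hi => by rw [(hint i).resolve_right (h i hi), mul_zero], add_zero]
    exact hz ⟨x, hx, rfl⟩

theorem add_sum_mul_le_dotProduct
    (hz : zstar ∈ lowerBounds {z | ∃ x : Fin E → ℝ, Feas A b grp x ∧ c ⬝ᵥ x = z})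
    (hideal : IsIdeal A b grp) (hinc : PairwiseIncompatible A b grp I)
    (hR : ∀ j ∈ I,
      zstar + R j ∈ lowerBounds {z | ∃ x : Fin E → ℝ, Feas A b grp x ∧ x j = 1 ∧ c ⬝ᵥ x = z})
    {x : Fin E → ℝ} (hx : Feas A b grp x) :
    zstar + ∑ kl ∈ I, R kl * x kl ≤ c ⬝ᵥ x := by
  have hshift : ∀ y : Fin E → ℝ,
      (c - fun j => if j ∈ I then R j else 0) ⬝ᵥ y = c ⬝ᵥ y - ∑ kl ∈ I, R kl * y kl := by
    intro y
    rw [sub_dotProduct]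
    congr 1
    simp [dotProduct, ite_mul, sum_ite_mem]
  have := hideal.le_dotProduct (fun y hy hint => by
    rw [hshift, le_sub_iff_add_le]
    exact add_sum_mul_le_dotProduct_of_integral hz hinc hR hy hint) hx
  rwa [hshift, le_sub_iff_add_le] at this

theorem dualObj_add_rc_eq
    (hz : zstar ∈ lowerBounds {z | ∃ x : Fin E → ℝ, Feas A b grp x ∧ c ⬝ᵥ x = z})
    (hideal : IsIdeal A b grp) (hI : I.Nonempty) (hinc : PairwiseIncompatible A b grp I)
    (hR : ∀ j ∈ I,
      IsLeast {z | ∃ x : Fin E → ℝ, Feas A b grp x ∧ x j = 1 ∧ c ⬝ᵥ x = z} (zstar + R j))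
    {uq : Fin m → ℝ} {uv : Fin n → ℝ} (hu : DualFeas A c grp uq uv)
    (hmaxu : ∀ (uq' : Fin m → ℝ) (uv' : Fin n → ℝ), DualFeas A c grp uq' uv' →
      dualObj b uq' uv' + (1 / (I.card : ℝ)) * ∑ kl ∈ I, rc A c grp uq' uv' kl ≤
      dualObj b uq uv + (1 / (I.card : ℝ)) * ∑ kl ∈ I, rc A c grp uq uv kl) :
    ∀ kl ∈ I, dualObj b uq uv + rc A c grp uq uv kl = zstar + R kl := by
  set N : ℝ := (I.card : ℝ)
  have hN : 0 < N := by simpa [N] using hI.card_pos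
  let χ : Fin E → ℝ := fun j => if j ∈ I then 1 / N else 0
  have hχ : ∀ f : Fin E → ℝ, f ⬝ᵥ χ = 1 / N * ∑ kl ∈ I, f kl := fun f => by
    simp [χ, dotProduct, sum_ite_mem, sum_mul, mul_comm]
  have hle : ∀ kl ∈ I, dualObj b uq uv + rc A c grp uq uv kl ≤ zstar + R kl := fun kl hkl => by
    obtain ⟨x, hx, hxkl, hcx⟩ := (hR kl hkl).1
    exact hcx ▸ dualObj_add_rc_le hx hu hxkl
  obtain ⟨x, hx, hχx, hcx⟩ := exists_feas_le_dualObj_add_rc_dotProduct (b := b) (χ := χ)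
    (fun j => by positivity) hu (by simpa only [hχ] using hmaxu)
  have hRx : 1 / N * ∑ kl ∈ I, R kl ≤ ∑ kl ∈ I, R kl * x kl := by
    rw [mul_sum]
    exact sum_le_sum fun kl hkl => by
      simpa [χ, hkl, mul_comm] using
        mul_le_mul_of_nonneg_left (hχx kl) (nonneg_of_add_mem hz (hR kl hkl).1)
  have hsum : ∑ kl ∈ I, (zstar + R kl) ≤ ∑ kl ∈ I, (dualObj b uq uv + rc A c grp uq uv kl) := by
    have hvalid := add_sum_mul_le_dotProduct hz hideal hinc (fun j hj => (hR j hj).2) hx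
    rw [hχ] at hcx
    have := mul_le_mul_of_nonneg_left (by linarith :
      zstar + 1 / N * ∑ kl ∈ I, R kl ≤ dualObj b uq uv + 1 / N * ∑ kl ∈ I, rc A c grp uq uv kl)
      hN.le
    simp only [sum_add_distrib, sum_const, nsmul_eq_mul]
    field_simp at this
    linarith
  exact (sum_eq_sum_iff_of_le hle).1 (le_antisymm (sum_le_sum hle) hsum)

end PartitionLP

theorem stmt17_general {m n E : ℕ} (A : Matrix (Fin m) (Fin E) ℝ) (b : Fin m → ℝ)
    (c : Fin E → ℝ) (grp : Fin E → Fin n) (zstar : ℝ)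
    (hz : IsLeast {z | ∃ x : Fin E → ℝ, Feas A b grp x ∧ c ⬝ᵥ x = z} zstar)
    (hideal : ∀ c' : Fin E → ℝ, (∃ x0 : Fin E → ℝ, Feas A b grp x0) →
      ∃ xt : Fin E → ℝ, Feas A b grp xt ∧ Integral xt ∧
        ∀ y : Fin E → ℝ, Feas A b grp y → c' ⬝ᵥ xt ≤ c' ⬝ᵥ y)
    (I : Finset (Fin E)) (hI : I.Nonempty)
    (hinc : ∀ x : Fin E → ℝ, Feas A b grp x → Integral x →
      ∀ j ∈ I, ∀ j' ∈ I, x j = 1 → x j' = 1 → j = j')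
    (R : Fin E → ℝ)
    (hR : ∀ j ∈ I,
      IsLeast {z | ∃ x : Fin E → ℝ, Feas A b grp x ∧ x j = 1 ∧ c ⬝ᵥ x = z}
        (zstar + R j))
    (hopt0 : ∃ kl ∈ I, ∃ x : Fin E → ℝ, Feas A b grp x ∧ Integral x ∧
      c ⬝ᵥ x = zstar ∧ x kl = 1)
    (uq : Fin m → ℝ) (uv : Fin n → ℝ) (hu : DualFeas A c grp uq uv)
    (hmaxu : ∀ (uq' : Fin m → ℝ) (uv' : Fin n → ℝ), DualFeas A c grp uq' uv' →
      dualObj b uq' uv' + (1 / (I.card : ℝ)) * ∑ kl ∈ I, rc A c grp uq' uv' kl ≤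
      dualObj b uq uv + (1 / (I.card : ℝ)) * ∑ kl ∈ I, rc A c grp uq uv kl) :
    zstar = dualObj b uq uv + I.inf' hI (fun kl => rc A c grp uq uv kl) := by
  have heq := dualObj_add_rc_eq hz.2 hideal hI hinc hR hu hmaxu
  obtain ⟨kl₀, hkl₀, x₀, hx₀, -, hcx₀, hx₀kl₀⟩ := hopt0
  have hRkl₀ : R kl₀ ≤ 0 := by linarith [(hR kl₀ hkl₀).2 ⟨x₀, hx₀, hx₀kl₀, hcx₀⟩]
  suffices I.inf' hI (fun kl => rc A c grp uq uv kl) = zstar - dualObj b uq uv by linarith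
  refine le_antisymm ?_ (le_inf' hI _ fun kl hkl => ?_)
  · linarith [inf'_le (fun kl => rc A c grp uq uv kl) hkl₀, heq kl₀ hkl₀]
  · linarith [heq kl hkl, nonneg_of_add_mem hz.2 (hR kl hkl).1]

/-- Lower bound recovery: if I is a nonempty set of pairwise incompatible indices
containing at least one index of some optimal integral solution, and u* optimizes the
merged-objective dual (D_I), then z* = w(u*) + min_{kl ∈ I} r_{kl}(u*). -/
theorem stmt17 {m n E : ℕ} (A : Matrix (Fin m) (Fin E) ℝ) (b : Fin m → ℝ)
    (c : Fin E → ℝ) (grp : Fin E → Fin n) (zstar : ℝ)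
    (hz : IsLeast {z | ∃ x : Fin E → ℝ, Feas A b grp x ∧ c ⬝ᵥ x = z} zstar)
    (hideal : ∀ c' : Fin E → ℝ, (∃ x0 : Fin E → ℝ, Feas A b grp x0) →
      ∃ xt : Fin E → ℝ, Feas A b grp xt ∧ Integral xt ∧
        ∀ y : Fin E → ℝ, Feas A b grp y → c' ⬝ᵥ xt ≤ c' ⬝ᵥ y)
    (I : Finset (Fin E)) (hI : I.Nonempty)
    (hinc : ∀ x : Fin E → ℝ, Feas A b grp x → Integral x →
      ∀ j ∈ I, ∀ j' ∈ I, x j = 1 → x j' = 1 → j = j')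
    (hmem : ∀ j ∈ I, ∃ x : Fin E → ℝ, Feas A b grp x ∧ Integral x ∧ x j = 1)
    (R : Fin E → ℝ)
    (hR : ∀ j ∈ I,
      IsLeast {z | ∃ x : Fin E → ℝ, Feas A b grp x ∧ x j = 1 ∧ c ⬝ᵥ x = z}
        (zstar + R j))
    (hopt0 : ∃ kl ∈ I, ∃ x : Fin E → ℝ, Feas A b grp x ∧ Integral x ∧
      c ⬝ᵥ x = zstar ∧ x kl = 1)
    (uq : Fin m → ℝ) (uv : Fin n → ℝ) (hu : DualFeas A c grp uq uv)
    (hmaxu : ∀ (uq' : Fin m → ℝ) (uv' : Fin n → ℝ), DualFeas A c grp uq' uv' →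
      dualObj b uq' uv' + (1 / (I.card : ℝ)) * ∑ kl ∈ I, rc A c grp uq' uv' kl ≤
      dualObj b uq uv + (1 / (I.card : ℝ)) * ∑ kl ∈ I, rc A c grp uq uv kl) :
    zstar = dualObj b uq uv + I.inf' hI (fun kl => rc A c grp uq uv kl) :=
  stmt17_general A b c grp zstar hz hideal I hI hinc R hR hopt0 uq uv hu hmaxu
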